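/- In the setting of the previous statement with M₀ = B₁⊗I + I⊗B₂ negative definite and M₁ = A₁⊗I + I⊗A₂, suppose (λ, v) satisfies (a₁(u)I + A₂)v = −λ(b₁(u)I + B₂)v for a unit vector u, where a₁(u) = uᵀA₁u, b₁(u) = uᵀB₁u, and v is a unit vector. Then λ = 𝔯(u⊗v) and the gradient ∇𝔯(u⊗v) is orthogonal to the subspace {u⊗y : y ∈ ℝᵐ}; consequently ∇𝔯(u⊗v) lies in {x⊗v : x ∈ ℝⁿ}. -/

import Mathlib

/-!
With `P = A₁ + λB₁` and `S = A₂ + λB₂`, the pencil `M₁ + λM₀` is the Kronecker sum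
`P ⊗ I + I ⊗ S`, and the hypothesis says `S v = -(uᵀPu) v`. Pairing with `w = u ⊗ v` gives
`⟨w, (M₁ + λM₀) w⟩ = uᵀPu + vᵀSv = 0`, i.e. `𝔯(w) = λ`. The gradient of the Rayleigh quotient
at `w` is a positive multiple of `(K + Kᵀ) w` with `K = M₁ + 𝔯(w) M₀`; since `S` is symmetric,
the eigen-relation turns this into `x ⊗ v` with `x = (P + Pᵀ)u - 2(uᵀPu)u`, and `x ⊥ u`
because `uᵀ(P + Pᵀ)u = 2 uᵀPu`.
-/

open Matrix Kronecker

namespace Matrix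

variable {R l m ι κ : Type*}

def kroneckerVec [Mul R] (u : ι → R) (v : κ → R) : ι × κ → R := fun p => u p.1 * v p.2

theorem kroneckerVec_smul_left [CommSemiring R] (c : R) (u : ι → R) (v : κ → R) :
    kroneckerVec (c • u) v = c • kroneckerVec u v := by
  ext p
  simp only [kroneckerVec, Pi.smul_apply, smul_eq_mul, mul_assoc]

theorem kroneckerVec_dotProduct_kroneckerVec [CommSemiring R] [Fintype ι] [Fintype κ]
    (a c : ι → R) (b d : κ → R) :
    kroneckerVec a b ⬝ᵥ kroneckerVec c d = (a ⬝ᵥ c) * (b ⬝ᵥ d) := by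
  simp only [kroneckerVec, dotProduct, Fintype.sum_prod_type, Finset.sum_mul_sum]
  exact Finset.sum_congr rfl fun i _ => Finset.sum_congr rfl fun j _ => by ring

theorem kronecker_mulVec_kroneckerVec [CommSemiring R] [Fintype ι] [Fintype κ]
    (A : Matrix l ι R) (B : Matrix m κ R) (u : ι → R) (v : κ → R) :
    (A ⊗ₖ B) *ᵥ kroneckerVec u v = kroneckerVec (A *ᵥ u) (B *ᵥ v) := by
  ext p
  simp only [kroneckerVec, mulVec, dotProduct, Fintype.sum_prod_type, kroneckerMap_apply,
    Finset.sum_mul_sum]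
  exact Finset.sum_congr rfl fun i _ => Finset.sum_congr rfl fun j _ => by ring

theorem dotProduct_add_transpose_mulVec_self [CommSemiring R] [Fintype ι] (A : Matrix ι ι R)
    (u : ι → R) : u ⬝ᵥ (A + Aᵀ) *ᵥ u = 2 * (u ⬝ᵥ A *ᵥ u) := by
  rw [add_mulVec, dotProduct_add, dotProduct_transpose_mulVec, two_mul]

section KroneckerSum

variable [CommSemiring R] [DecidableEq ι] [DecidableEq κ]

def kroneckerSum (A : Matrix ι ι R) (B : Matrix κ κ R) : Matrix (ι × κ) (ι × κ) R :=
  A ⊗ₖ 1 + 1 ⊗ₖ B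

theorem kroneckerSum_add (A A' : Matrix ι ι R) (B B' : Matrix κ κ R) :
    kroneckerSum A B + kroneckerSum A' B' = kroneckerSum (A + A') (B + B') := by
  simp only [kroneckerSum, add_kronecker, kronecker_add]
  abel

theorem smul_kroneckerSum (c : R) (A : Matrix ι ι R) (B : Matrix κ κ R) :
    c • kroneckerSum A B = kroneckerSum (c • A) (c • B) := by
  simp only [kroneckerSum, smul_add, smul_kronecker, kronecker_smul]

theorem transpose_kroneckerSum (A : Matrix ι ι R) (B : Matrix κ κ R) :
    (kroneckerSum A B)ᵀ = kroneckerSum Aᵀ Bᵀ := by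
  simp only [kroneckerSum, transpose_add, ← kroneckerMap_transpose, transpose_one]

variable [Fintype ι] [Fintype κ]

theorem kroneckerSum_mulVec_kroneckerVec (A : Matrix ι ι R) (B : Matrix κ κ R)
    (u : ι → R) (v : κ → R) :
    kroneckerSum A B *ᵥ kroneckerVec u v = kroneckerVec (A *ᵥ u) v + kroneckerVec u (B *ᵥ v) := by
  simp only [kroneckerSum, add_mulVec, kronecker_mulVec_kroneckerVec, one_mulVec]

theorem kroneckerVec_dotProduct_kroneckerSum_mulVec {u : ι → R} {v : κ → R}
    (hu : u ⬝ᵥ u = 1) (hv : v ⬝ᵥ v = 1) (A : Matrix ι ι R) (B : Matrix κ κ R) :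
    kroneckerVec u v ⬝ᵥ kroneckerSum A B *ᵥ kroneckerVec u v = u ⬝ᵥ A *ᵥ u + v ⬝ᵥ B *ᵥ v := by
  rw [kroneckerSum_mulVec_kroneckerVec, dotProduct_add, kroneckerVec_dotProduct_kroneckerVec,
    kroneckerVec_dotProduct_kroneckerVec, hu, hv, mul_one, one_mul]

theorem kroneckerSum_add_transpose_mulVec_kroneckerVec {A : Matrix ι ι R} {B : Matrix κ κ R}
    (hB : B.IsSymm) {c : R} {v : κ → R} (hBv : B *ᵥ v = c • v) (u : ι → R) :
    (kroneckerSum A B + (kroneckerSum A B)ᵀ) *ᵥ kroneckerVec u v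
      = kroneckerVec ((A + Aᵀ) *ᵥ u + (2 * c) • u) v := by
  rw [transpose_kroneckerSum, hB.eq, kroneckerSum_add, kroneckerSum_mulVec_kroneckerVec]
  ext p
  simp only [kroneckerVec, add_mulVec, hBv, Pi.add_apply, Pi.smul_apply, smul_eq_mul]
  ring

end KroneckerSum

end Matrix

theorem HasGradientAt.div {F : Type*} [NormedAddCommGroup F] [InnerProductSpace ℝ F]
    [CompleteSpace F] {f g : F → ℝ} {f' g' x : F} (hf : HasGradientAt f f' x)
    (hg : HasGradientAt g g' x) (hx : g x ≠ 0) :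
    HasGradientAt (fun y => f y / g y) ((g x)⁻¹ • (f' - (f x / g x) • g')) x := by
  rw [hasGradientAt_iff_hasFDerivAt] at *
  have hquot : (fun y => f y / g y) = f * (fun t => t⁻¹) ∘ g :=
    funext fun y => div_eq_mul_inv _ _
  rw [hquot]
  refine (hf.mul ((hasDerivAt_inv hx).comp_hasFDerivAt x hg)).congr_fderiv ?_
  ext y
  simp only [Function.comp_apply, _root_.add_apply, _root_.smul_apply, _root_.sub_apply,
    InnerProductSpace.toDual_apply_apply, map_smul, map_sub, smul_eq_mul]
  field_simp
  ring

section RayleighQuotient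

variable {ι : Type*} [Fintype ι] [DecidableEq ι]

theorem hasGradientAt_dotProduct_mulVec (M : Matrix ι ι ℝ) (w : EuclideanSpace ℝ ι) :
    HasGradientAt (fun X : EuclideanSpace ℝ ι => X.ofLp ⬝ᵥ M *ᵥ X.ofLp)
      (WithLp.toLp 2 ((M + Mᵀ) *ᵥ w.ofLp)) w := by
  rw [hasGradientAt_iff_hasFDerivAt]
  have h := (hasFDerivAt_id w).inner ℝ (toEuclideanCLM (𝕜 := ℝ) M).hasFDerivAt
  simp only [inner_toEuclideanCLM, id] at h
  refine h.congr_fderiv ?_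
  ext y
  simp only [ContinuousLinearMap.comp_apply, ContinuousLinearMap.prod_apply,
    ContinuousLinearMap.id_apply, fderivInnerCLM_apply, EuclideanSpace.inner_eq_star_dotProduct,
    ofLp_toEuclideanCLM, star_trivial, add_mulVec, WithLp.toLp_add, map_add, _root_.add_apply,
    InnerProductSpace.toDual_apply_apply, dotProduct_transpose_mulVec]
  rw [dotProduct_comm, add_comm, dotProduct_comm]

theorem hasGradientAt_dotProduct_mulVec_div (M₁ M₂ : Matrix ι ι ℝ) {w : EuclideanSpace ℝ ι}
    {r : ℝ} (hw : w.ofLp ⬝ᵥ M₂ *ᵥ w.ofLp ≠ 0)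
    (hr : w.ofLp ⬝ᵥ M₁ *ᵥ w.ofLp = r * w.ofLp ⬝ᵥ M₂ *ᵥ w.ofLp) :
    HasGradientAt (fun X : EuclideanSpace ℝ ι => X.ofLp ⬝ᵥ M₁ *ᵥ X.ofLp / X.ofLp ⬝ᵥ M₂ *ᵥ X.ofLp)
      ((w.ofLp ⬝ᵥ M₂ *ᵥ w.ofLp)⁻¹ •
        WithLp.toLp 2 ((M₁ - r • M₂ + (M₁ - r • M₂)ᵀ) *ᵥ w.ofLp)) w := by
  convert (hasGradientAt_dotProduct_mulVec M₁ w).div (hasGradientAt_dotProduct_mulVec M₂ w) hw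
    using 2
  rw [hr, mul_div_cancel_right₀ _ hw]
  ext i
  simp only [transpose_sub, transpose_smul, add_mulVec, sub_mulVec, smul_mulVec, smul_add,
    WithLp.toLp_add, PiLp.sub_apply, PiLp.add_apply, PiLp.smul_apply, Pi.add_apply, Pi.sub_apply,
    Pi.smul_apply, smul_eq_mul]
  ring

end RayleighQuotient

theorem stmt_19_general {n m : ℕ}
    (A₁ B₁ : Matrix (Fin n) (Fin n) ℝ) (A₂ B₂ : Matrix (Fin m) (Fin m) ℝ)
    (hA₂ : A₂.IsSymm) (hB₂ : B₂.IsSymm)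
    (M₀ M₁ : Matrix (Fin n × Fin m) (Fin n × Fin m) ℝ)
    (hM₀ : M₀ = B₁ ⊗ₖ (1 : Matrix (Fin m) (Fin m) ℝ) + (1 : Matrix (Fin n) (Fin n) ℝ) ⊗ₖ B₂)
    (hM₁ : M₁ = A₁ ⊗ₖ (1 : Matrix (Fin m) (Fin m) ℝ) + (1 : Matrix (Fin n) (Fin n) ℝ) ⊗ₖ A₂)
    (hM₀neg : (-M₀).PosDef)
    (R : EuclideanSpace ℝ (Fin n × Fin m) → ℝ)
    (hR : ∀ X : EuclideanSpace ℝ (Fin n × Fin m),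
      R X = ((fun p => X p) ⬝ᵥ M₁.mulVec (fun p => X p)) /
        -((fun p => X p) ⬝ᵥ M₀.mulVec (fun p => X p)))
    (u : Fin n → ℝ) (v : Fin m → ℝ)
    (hu : u ⬝ᵥ u = 1) (hv : v ⬝ᵥ v = 1)
    (lam : ℝ)
    (heig : ((u ⬝ᵥ A₁.mulVec u) • (1 : Matrix (Fin m) (Fin m) ℝ) + A₂).mulVec v
      = (-lam) • (((u ⬝ᵥ B₁.mulVec u) • (1 : Matrix (Fin m) (Fin m) ℝ) + B₂).mulVec v))
    (w : EuclideanSpace ℝ (Fin n × Fin m)) (hw : ∀ p, w p = u p.1 * v p.2) :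
    lam = R w ∧
      (∀ y : Fin m → ℝ,
        (fun p : Fin n × Fin m => gradient R w p) ⬝ᵥ (fun p => u p.1 * y p.2) = 0) ∧
      ∃ x : Fin n → ℝ, ∀ p : Fin n × Fin m, gradient R w p = x p.1 * v p.2 := by
  set P := A₁ + lam • B₁
  set S := A₂ + lam • B₂
  have hwuv : w.ofLp = kroneckerVec u v := funext hw
  have hSv : S *ᵥ v = -(u ⬝ᵥ P *ᵥ u) • v := by
    have hPu : u ⬝ᵥ P *ᵥ u = u ⬝ᵥ A₁ *ᵥ u + lam * u ⬝ᵥ B₁ *ᵥ u := by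
      simp only [P, add_mulVec, smul_mulVec, dotProduct_add, dotProduct_smul, smul_eq_mul]
    ext j
    have h := congrFun heig j
    simp only [S, hPu, add_mulVec, smul_mulVec, one_mulVec, Pi.add_apply, Pi.smul_apply,
      smul_eq_mul] at h ⊢
    linear_combination h
  have hpencil : M₁ - lam • -M₀ = kroneckerSum P S := by
    rw [hM₀, hM₁, smul_neg, sub_neg_eq_add]
    change kroneckerSum A₁ A₂ + lam • kroneckerSum B₁ B₂ = _
    rw [smul_kroneckerSum, kroneckerSum_add]
  have hRquot : R = fun X => X.ofLp ⬝ᵥ M₁ *ᵥ X.ofLp / X.ofLp ⬝ᵥ (-M₀) *ᵥ X.ofLp :=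
    funext fun X => by rw [hR, neg_mulVec, dotProduct_neg]
  have hden : 0 < w.ofLp ⬝ᵥ (-M₀) *ᵥ w.ofLp := by
    have hunit : kroneckerVec u v ⬝ᵥ kroneckerVec u v = 1 := by
      rw [kroneckerVec_dotProduct_kroneckerVec, hu, hv, mul_one]
    have hne : w.ofLp ≠ 0 := fun h => by simp [← hwuv, h] at hunit
    simpa only [star_trivial] using hM₀neg.dotProduct_mulVec_pos hne
  have hnum : w.ofLp ⬝ᵥ M₁ *ᵥ w.ofLp = lam * w.ofLp ⬝ᵥ (-M₀) *ᵥ w.ofLp := by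
    have h := kroneckerVec_dotProduct_kroneckerSum_mulVec hu hv P S
    rw [← hpencil, ← hwuv, sub_mulVec, dotProduct_sub, smul_mulVec, dotProduct_smul, hSv,
      dotProduct_smul, hv, smul_eq_mul, smul_eq_mul] at h
    linear_combination h
  have hgrad := (hasGradientAt_dotProduct_mulVec_div M₁ (-M₀) hden.ne' hnum).gradient
  rw [← hRquot, hpencil, hwuv, kroneckerSum_add_transpose_mulVec_kroneckerVec
    (hA₂.add (hB₂.smul lam)) hSv, ← WithLp.toLp_smul, ← kroneckerVec_smul_left] at hgrad
  refine ⟨?_, fun y => ?_, _, fun p => by rw [hgrad]; rfl⟩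
  · rw [hRquot]
    dsimp only
    rw [hnum, mul_div_cancel_right₀ _ hden.ne']
  · rw [hgrad]
    change kroneckerVec _ v ⬝ᵥ kroneckerVec u y = 0
    rw [kroneckerVec_dotProduct_kroneckerVec, dotProduct_comm, dotProduct_smul, dotProduct_add,
      dotProduct_add_transpose_mulVec_self, dotProduct_smul, hu, smul_eq_mul, smul_eq_mul]
    ring

/-- Key orthogonality step: after a half step of the alternating algorithm, i.e. when
`(a₁(u)I + A₂)v = −λ(b₁(u)I + B₂)v` for unit `u, v`, we have `λ = 𝔯(u⊗v)` and the
gradient of the Rayleigh quotient at `u⊗v` is orthogonal to `{u⊗y}`, hence lies in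
`{x⊗v}`. -/
theorem stmt_19 {n m : ℕ}
    (A₁ B₁ : Matrix (Fin n) (Fin n) ℝ) (A₂ B₂ : Matrix (Fin m) (Fin m) ℝ)
    (hA₁ : A₁.IsSymm) (hB₁ : B₁.IsSymm) (hA₂ : A₂.IsSymm) (hB₂ : B₂.IsSymm)
    (M₀ M₁ : Matrix (Fin n × Fin m) (Fin n × Fin m) ℝ)
    (hM₀ : M₀ = B₁ ⊗ₖ (1 : Matrix (Fin m) (Fin m) ℝ) + (1 : Matrix (Fin n) (Fin n) ℝ) ⊗ₖ B₂)
    (hM₁ : M₁ = A₁ ⊗ₖ (1 : Matrix (Fin m) (Fin m) ℝ) + (1 : Matrix (Fin n) (Fin n) ℝ) ⊗ₖ A₂)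
    (hM₀neg : (-M₀).PosDef)
    (R : EuclideanSpace ℝ (Fin n × Fin m) → ℝ)
    (hR : ∀ X : EuclideanSpace ℝ (Fin n × Fin m),
      R X = ((fun p => X p) ⬝ᵥ M₁.mulVec (fun p => X p)) /
        -((fun p => X p) ⬝ᵥ M₀.mulVec (fun p => X p)))
    (u : Fin n → ℝ) (v : Fin m → ℝ)
    (hu : u ⬝ᵥ u = 1) (hv : v ⬝ᵥ v = 1)
    (lam : ℝ)
    (heig : ((u ⬝ᵥ A₁.mulVec u) • (1 : Matrix (Fin m) (Fin m) ℝ) + A₂).mulVec v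
      = (-lam) • (((u ⬝ᵥ B₁.mulVec u) • (1 : Matrix (Fin m) (Fin m) ℝ) + B₂).mulVec v))
    (w : EuclideanSpace ℝ (Fin n × Fin m)) (hw : ∀ p, w p = u p.1 * v p.2) :
    lam = R w ∧
      (∀ y : Fin m → ℝ,
        (fun p : Fin n × Fin m => gradient R w p) ⬝ᵥ (fun p => u p.1 * y p.2) = 0) ∧
      ∃ x : Fin n → ℝ, ∀ p : Fin n × Fin m, gradient R w p = x p.1 * v p.2 :=
  stmt_19_general A₁ B₁ A₂ B₂ hA₂ hB₂ M₀ M₁ hM₀ hM₁ hM₀neg R hR u v hu hv lam heig w hw
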